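/- Let S ∈ ℝ^{r₁×r₂×⋯×r_d} with ‖S‖₁ ≤ τ, fix j ∈ {1,…,d}, let V_i ∈ ℝ^{n_i×r_i} for each i ≠ j be matrices each of whose columns has ℓ2 norm at most 1, and let W ∈ ℝ^{n_j×r_j} be arbitrary. Then ‖S ×₁ V₁ ⋯ ×_{j−1} V_{j−1} ×_j W ×_{j+1} V_{j+1} ⋯ ×_d V_d‖_F ≤ τ · max_{k∈{1,…,r_j}} ‖W(:,k)‖₂. -/

import Mathlib

open scoped BigOperators

noncomputable section

/-- Frobenius (ℓ2) norm of a finitely-indexed real array. -/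
def frob {ι : Type*} [Fintype ι] (Z : ι → ℝ) : ℝ :=
  Real.sqrt (∑ x, (Z x) ^ 2)

/-- ℓ1 norm of a finitely-indexed real array. -/
def l1 {ι : Type*} [Fintype ι] (Z : ι → ℝ) : ℝ :=
  ∑ x, |Z x|

/-- Tucker product `S ×₁ U₁ ×₂ U₂ ⋯ ×_d U_d`. -/
def tucker {d : ℕ} {n r : Fin d → ℕ} (S : (∀ i, Fin (r i)) → ℝ)
    (U : ∀ i, Fin (n i) → Fin (r i) → ℝ) : (∀ i, Fin (n i)) → ℝ :=
  fun x => ∑ k : ∀ i, Fin (r i), S k * ∏ i, U i (x i) (k i)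

/-- The set `G_{r,s,τ}` of `r`-rank, `s`-sparse tensors whose core has ℓ1 norm at most `τ`
and whose factor-matrix columns have at most `sᵢ` nonzero entries and ℓ2 norm at most 1. -/
def Gset {d : ℕ} (n r s : Fin d → ℕ) (τ : ℝ) : Set ((∀ i, Fin (n i)) → ℝ) :=
  { Z | ∃ (S : (∀ i, Fin (r i)) → ℝ) (U : ∀ i, Fin (n i) → Fin (r i) → ℝ),
      l1 S ≤ τ ∧
      (∀ i j, (Function.support fun a => U i a j).ncard ≤ s i) ∧
      (∀ i j, Real.sqrt (∑ a, (U i a j) ^ 2) ≤ 1) ∧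
      Z = tucker S U }


/-!
Expanding the Tucker product over the core indices writes it as a sum of rank-one tensors
`S k • (U₁(:,k₁) ⊗ ⋯ ⊗ U_d(:,k_d))`. The Frobenius norm of a rank-one tensor is the product of
the norms of its factors, which is at most `‖W(:,k_j)‖₂` when every factor other than the `j`-th
is a unit-ball column. The triangle inequality then bounds the whole sum by `‖S‖₁ · max_k ‖W(:,k)‖₂`.
-/

open Finset

lemma frob_eq_norm_toLp {ι : Type*} [Fintype ι] (Z : ι → ℝ) :
    frob Z = ‖WithLp.toLp 2 Z‖ := by
  simp [frob, EuclideanSpace.norm_eq, sq_abs]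

lemma frob_sum_le {ι κ : Type*} [Fintype ι] [Fintype κ] (f : κ → ι → ℝ) :
    frob (fun x => ∑ k, f k x) ≤ ∑ k, frob (f k) := by
  have hsum : (fun x => ∑ k, f k x) = ∑ k, f k := by
    funext x
    rw [Finset.sum_apply]
  simp_rw [frob_eq_norm_toLp, hsum, WithLp.toLp_sum]
  exact norm_sum_le _ _

lemma frob_const_mul {ι : Type*} [Fintype ι] (c : ℝ) (g : ι → ℝ) :
    frob (fun x => c * g x) = |c| * frob g := by
  simp only [frob, mul_pow, ← mul_sum]
  rw [Real.sqrt_mul (sq_nonneg c), Real.sqrt_sq_eq_abs]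

lemma frob_pi_prod {ι : Type*} [Fintype ι] [DecidableEq ι] {κ : ι → Type*}
    [∀ i, Fintype (κ i)] (u : ∀ i, κ i → ℝ) :
    frob (fun x : ∀ i, κ i => ∏ i, u i (x i)) = ∏ i, frob (u i) := by
  have hsq : ∑ x : ∀ i, κ i, (∏ i, u i (x i)) ^ 2 = ∏ i, ∑ a, u i a ^ 2 := by
    simp_rw [← prod_pow]
    exact (Fintype.prod_sum fun i a => u i a ^ 2).symm
  rw [frob, hsq, Real.sqrt_prod _ fun i _ => sum_nonneg fun a _ => sq_nonneg _]
  rfl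

lemma frob_tucker_le {d : ℕ} {n r : Fin d → ℕ} (S : (∀ i, Fin (r i)) → ℝ)
    (U : ∀ i, Fin (n i) → Fin (r i) → ℝ) :
    frob (tucker S U) ≤ ∑ k, |S k| * ∏ i, frob (fun a => U i a (k i)) := by
  calc frob (tucker S U)
      ≤ ∑ k, frob (fun x : ∀ i, Fin (n i) => S k * ∏ i, U i (x i) (k i)) := by
        unfold tucker
        exact frob_sum_le _
    _ = ∑ k, |S k| * ∏ i, frob (fun a => U i a (k i)) := by
        refine sum_congr rfl fun k _ => ?_
        rw [frob_const_mul, ← frob_pi_prod fun i a => U i a (k i)]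

lemma prod_frob_update_le {d : ℕ} {n r : Fin d → ℕ} (j : Fin d)
    (V : ∀ i, Fin (n i) → Fin (r i) → ℝ)
    (hV : ∀ i, i ≠ j → ∀ k, frob (fun a => V i a k) ≤ 1)
    (W : Fin (n j) → Fin (r j) → ℝ) (k : ∀ i, Fin (r i)) :
    ∏ i, frob (fun a => Function.update V j W i a (k i)) ≤ frob (fun a => W a (k j)) := by
  rw [← mul_prod_erase _ _ (mem_univ j), Function.update_self]
  have hrest : ∏ i ∈ univ.erase j, frob (fun a => Function.update V j W i a (k i)) ≤ 1 := by
    refine prod_le_one (fun i _ => Real.sqrt_nonneg _) fun i hi => ?_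
    have hij : i ≠ j := ne_of_mem_erase hi
    rw [Function.update_of_ne hij]
    exact hV i hij (k i)
  exact mul_le_of_le_one_right (Real.sqrt_nonneg _) hrest

theorem tucker_one_slot_bound_general
    {d : ℕ} {n r : Fin d → ℕ} {τ : ℝ}
    (S : (∀ i, Fin (r i)) → ℝ) (hS : l1 S ≤ τ)
    (j : Fin d)
    (V : ∀ i, Fin (n i) → Fin (r i) → ℝ)
    (hV : ∀ i, i ≠ j → ∀ k, Real.sqrt (∑ a, (V i a k) ^ 2) ≤ 1)
    (W : Fin (n j) → Fin (r j) → ℝ) :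
    frob (tucker S (Function.update V j W)) ≤
      τ * ⨆ k : Fin (r j), Real.sqrt (∑ a, (W a k) ^ 2) := by
  set M := ⨆ k : Fin (r j), Real.sqrt (∑ a, (W a k) ^ 2)
  have hcol (k : Fin (r j)) : frob (fun a => W a k) ≤ M :=
    le_ciSup (f := fun k => frob (fun a => W a k)) (Set.finite_range _).bddAbove k
  have hM : 0 ≤ M := Real.iSup_nonneg fun _ => Real.sqrt_nonneg _
  calc frob (tucker S (Function.update V j W))
      ≤ ∑ k, |S k| * ∏ i, frob (fun a => Function.update V j W i a (k i)) :=
        frob_tucker_le S _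
    _ ≤ ∑ k, |S k| * M := by
        gcongr with k
        exact (prod_frob_update_le j V hV W k).trans (hcol (k j))
    _ = l1 S * M := by rw [l1, sum_mul]
    _ ≤ τ * M := by gcongr

/-- Tucker product with one factor replaced by an arbitrary matrix `W` has
Frobenius norm at most `τ · max_k ‖W(:,k)‖₂`. -/
theorem tucker_one_slot_bound
    {d : ℕ} {n r : Fin d → ℕ} {τ : ℝ} (hτ : 0 < τ)
    (S : (∀ i, Fin (r i)) → ℝ) (hS : l1 S ≤ τ)
    (j : Fin d) (hrj : 0 < r j)
    (V : ∀ i, Fin (n i) → Fin (r i) → ℝ)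
    (hV : ∀ i, i ≠ j → ∀ k, Real.sqrt (∑ a, (V i a k) ^ 2) ≤ 1)
    (W : Fin (n j) → Fin (r j) → ℝ) :
    frob (tucker S (Function.update V j W)) ≤
      τ * ⨆ k : Fin (r j), Real.sqrt (∑ a, (W a k) ^ 2) :=
  tucker_one_slot_bound_general S hS j V hV W
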